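/- Let H and K be Hilbert C*-modules over a C*-algebra A and T ∈ End*_A(H,K) adjointable. Then T is surjective if and only if T* is bounded below with respect to the inner product, i.e. there exists m' > 0 such that ⟨T*x,T*x⟩ ≥ m'⟨x,x⟩ for all x ∈ K; and this is also equivalent to T* being bounded below in norm: ‖T*x‖ ≥ m‖x‖ for some m > 0 and all x ∈ K. -/

import Mathlib

open CStarModule

/-- The December 2024 Mathlib `CStarModule`: a Hilbert C⋆-module with a *right* `A`-action
(Mathlib's `CStarModule` now uses a left action `[SMul A E]` with other axioms). -/
class CStarModuleRight (A E : Type*) [NonUnitalSemiring A] [StarRing A] [Module ℂ A]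
    [AddCommGroup E] [Module ℂ E] [PartialOrder A] [SMul Aᵐᵒᵖ E] [Norm A] [Norm E]
    extends Inner A E where
  inner_add_right {x} {y} {z} : inner x (y + z) = inner x y + inner x z
  inner_self_nonneg {x} : 0 ≤ inner x x
  inner_self {x} : inner x x = 0 ↔ x = 0
  inner_op_smul_right {a : A} {x y : E} : inner x (MulOpposite.op a • y) = inner x y * a
  inner_smul_right_complex {z : ℂ} {x} {y} : inner x (z • y) = z • inner x y
  star_inner x y : star (inner x y) = inner y x
  norm_eq_sqrt_norm_inner_self x : ‖x‖ = √‖inner x x‖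

/-!
Write `S = T T*`, an adjointable operator on `K`, so that `⟨S x, x⟩ = ⟨T* x, T* x⟩`.
If `‖T* x‖ ≥ m ‖x‖`, then for every `ρ ≤ 0` the self-adjoint element `S - ρ` of the C⋆-algebra
of adjointable operators on `K` is bounded below, hence invertible; so `S` is strictly positive.
Then `S` is invertible, which makes `T` surjective, and `S ≥ r` for some `r > 0`, which gives
`⟨T* x, T* x⟩ ≥ r ⟨x, x⟩` (evaluate `⟨(S - r) x, x⟩` through the square root of `S - r`).
Conversely, if `T` is surjective, the open mapping theorem writes `x = T h` with
`‖h‖ ≤ C ‖x‖`, and `‖x‖² = ‖⟨h, T* x⟩‖ ≤ C ‖x‖ ‖T* x‖`.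
-/

open scoped InnerProductSpace

/-- If `a` were not invertible, then `z = i c / 3`, which is not in the real spectrum of `a`, lies
in the spectrum of `z - a`, so `v = (z - a)⁻¹` has `‖v‖ ≥ 3 / c`; but `a v = z v - 1` gives
`c ‖v‖ ≤ (c / 3) ‖v‖ + 1`. -/
theorem IsSelfAdjoint.isUnit_of_le_norm_mul {A : Type*} [CStarAlgebra A] {a : A}
    (ha : IsSelfAdjoint a) {c : ℝ} (hc : 0 < c) (h : ∀ b, c * ‖b‖ ≤ ‖a * b‖) : IsUnit a := by
  nontriviality A
  by_contra hna
  set t := c / 3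
  set z : ℂ := t * Complex.I
  have hz_norm : ‖z‖ = t := by simp [z, t, abs_of_pos hc]
  have hz : z ∉ spectrum ℂ a := fun hz => by
    have him := congrArg Complex.im (ha.mem_spectrum_eq_re hz)
    simp only [z, t, Complex.mul_im, Complex.ofReal_re, Complex.I_im, Complex.ofReal_im,
      Complex.I_re] at him
    exact hc.ne' (by linarith)
  obtain ⟨u, hu⟩ := spectrum.notMem_iff.mp hz
  have hz_mem : z ∈ spectrum ℂ (u : A) := by
    rw [hu, ← spectrum.singleton_sub_eq]
    simpa using Set.sub_mem_sub (Set.mem_singleton z) ((spectrum.zero_mem_iff ℂ).mpr hna)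
  have h_inv : 1 ≤ ‖(↑u⁻¹ : A)‖ * t := by
    have hz0 : z ≠ 0 := norm_pos_iff.mp (by rw [hz_norm]; positivity)
    have h_norm := spectrum.norm_le_norm_of_mem
      ((spectrum.inv_mem_iff (r := Units.mk0 z hz0) (a := u)).mp hz_mem)
    rw [Units.val_inv_eq_inv_val, Units.val_mk0, norm_inv, hz_norm] at h_norm
    rwa [inv_le_iff_one_le_mul₀ (by positivity)] at h_norm
  have h_mul : a * ↑u⁻¹ = z • ↑u⁻¹ - 1 := by
    have h_one := u.mul_inv
    rw [hu, sub_mul, Algebra.algebraMap_eq_smul_one, smul_one_mul] at h_one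
    rw [eq_sub_iff_add_eq, ← h_one]
    abel
  have h_bound := (h ↑u⁻¹).trans (h_mul ▸ norm_sub_le _ _)
  rw [norm_smul, hz_norm, norm_one] at h_bound
  have hc_eq : c * ‖(↑u⁻¹ : A)‖ = 3 * (‖(↑u⁻¹ : A)‖ * t) := by simp only [t]; ring
  linarith

theorem ContinuousLinearMap.mul_opNorm_le_opNorm_comp {𝕜 E F G : Type*} [NontriviallyNormedField 𝕜]
    [NormedAddCommGroup E] [NormedSpace 𝕜 E] [NormedAddCommGroup F] [NormedSpace 𝕜 F]
    [NormedAddCommGroup G] [NormedSpace 𝕜 G] {S : F →L[𝕜] G} {c : ℝ} (hc : 0 < c)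
    (h : ∀ x, c * ‖x‖ ≤ ‖S x‖) (V : E →L[𝕜] F) : c * ‖V‖ ≤ ‖S ∘L V‖ := by
  rw [← le_div_iff₀' hc]
  refine V.opNorm_le_bound (by positivity) fun x => ?_
  rw [div_mul_eq_mul_div, le_div_iff₀' hc]
  exact (h (V x)).trans ((S ∘L V).le_opNorm x)

namespace CStarModule

section AdjointPair

variable (B : Type*) {E F G : Type*} [NonUnitalCStarAlgebra B] [PartialOrder B]
  [SMul B E] [NormedAddCommGroup E] [NormedSpace ℂ E] [CStarModule B E]
  [SMul B F] [NormedAddCommGroup F] [NormedSpace ℂ F] [CStarModule B F]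
  [SMul B G] [NormedAddCommGroup G] [NormedSpace ℂ G] [CStarModule B G]

def IsAdjointPair (S : E →L[ℂ] F) (S' : F →L[ℂ] E) : Prop :=
  ∀ x y, ⟪S x, y⟫_B = ⟪x, S' y⟫_B

theorem ext_inner_left {y z : E} (h : ∀ x, ⟪x, y⟫_B = ⟪x, z⟫_B) : y = z := by
  rw [← sub_eq_zero, ← inner_self (A := B), inner_sub_right, h, sub_self]

variable {B}

theorem isAdjointPair_id : IsAdjointPair B (ContinuousLinearMap.id ℂ E) (.id ℂ E) :=
  fun _ _ => rfl

namespace IsAdjointPair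

variable {S T : E →L[ℂ] F} {S' T' : F →L[ℂ] E}

theorem symm (h : IsAdjointPair B S S') : IsAdjointPair B S' S := fun _ _ => by
  rw [← star_inner, ← h, star_inner]

theorem comp {R : F →L[ℂ] G} {R' : G →L[ℂ] F} (hS : IsAdjointPair B S S')
    (hR : IsAdjointPair B R R') : IsAdjointPair B (R ∘L S) (S' ∘L R') :=
  fun _ _ => (hR _ _).trans (hS _ _)

theorem add (hS : IsAdjointPair B S S') (hT : IsAdjointPair B T T') :
    IsAdjointPair B (S + T) (S' + T') := fun x y => by
  simp [hS x y, hT x y]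

theorem sub (hS : IsAdjointPair B S S') (hT : IsAdjointPair B T T') :
    IsAdjointPair B (S - T) (S' - T') := fun x y => by
  simp [hS x y, hT x y]

theorem smul (h : IsAdjointPair B S S') (c : ℂ) : IsAdjointPair B (c • S) (star c • S') :=
  fun x y => by simp [h x y]

theorem unique (h : IsAdjointPair B S S') (h' : IsAdjointPair B S T') : S' = T' :=
  ContinuousLinearMap.ext fun y => ext_inner_left B fun x => (h x y).symm.trans (h' x y)

variable [StarOrderedRing B]

theorem norm_sq_le_norm_comp (h : IsAdjointPair B S S') : ‖S'‖ ^ 2 ≤ ‖S ∘L S'‖ := by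
  have hbound : ‖S'‖ ≤ √‖S ∘L S'‖ := S'.opNorm_le_bound (Real.sqrt_nonneg _) fun y => by
    rw [← Real.sqrt_sq (norm_nonneg (S' y)), ← Real.sqrt_sq (norm_nonneg y),
      ← Real.sqrt_mul (norm_nonneg _)]
    gcongr
    calc ‖S' y‖ ^ 2 = ‖⟪S (S' y), y⟫_B‖ := by rw [norm_sq_eq B, h]
      _ ≤ ‖(S ∘L S') y‖ * ‖y‖ := norm_inner_le F
      _ ≤ ‖S ∘L S'‖ * ‖y‖ ^ 2 := by
        rw [sq, ← mul_assoc]; gcongr; exact (S ∘L S').le_opNorm y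
  calc ‖S'‖ ^ 2 ≤ √‖S ∘L S'‖ ^ 2 := by gcongr
    _ = ‖S ∘L S'‖ := Real.sq_sqrt (norm_nonneg _)

theorem norm_le (h : IsAdjointPair B S S') : ‖S'‖ ≤ ‖S‖ := by
  rcases (norm_nonneg S').eq_or_lt with h0 | hpos
  · rw [← h0]; exact norm_nonneg S
  · refine le_of_mul_le_mul_right ?_ hpos
    calc ‖S‖ * ‖S'‖ ≥ ‖S ∘L S'‖ := S.opNorm_comp_le S'
      _ ≥ ‖S'‖ ^ 2 := h.norm_sq_le_norm_comp
      _ = ‖S'‖ * ‖S'‖ := sq _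

end IsAdjointPair

variable [StarOrderedRing B]

theorem isClosed_setOf_isAdjointPair :
    IsClosed {p : (E →L[ℂ] F) × (F →L[ℂ] E) | IsAdjointPair B p.1 p.2} := by
  simp only [IsAdjointPair, Set.ofPred_forall]
  exact isClosed_iInter fun x => isClosed_iInter fun y =>
    isClosed_eq (by fun_prop) (by fun_prop)

end AdjointPair

section AdjointableEnd

variable (B E : Type*) [NonUnitalCStarAlgebra B] [PartialOrder B]
  [SMul B E] [NormedAddCommGroup E] [NormedSpace ℂ E] [CStarModule B E]

def adjointableEnd : Subalgebra ℂ (E →L[ℂ] E) where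
  carrier := {S | ∃ S', IsAdjointPair B S S'}
  mul_mem' := fun ⟨S', hS⟩ ⟨R', hR⟩ => ⟨R' ∘L S', hR.comp hS⟩
  add_mem' := fun ⟨S', hS⟩ ⟨R', hR⟩ => ⟨S' + R', hS.add hR⟩
  algebraMap_mem' c := ⟨star c • 1, (isAdjointPair_id (B := B)).smul c⟩

variable {B E}

namespace adjointableEnd

noncomputable instance : Star (adjointableEnd B E) where
  star S := ⟨S.2.choose, _, S.2.choose_spec.symm⟩

theorem isAdjointPair_coe_star (S : adjointableEnd B E) :
    IsAdjointPair B (S : E →L[ℂ] E) (star S : adjointableEnd B E) :=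
  S.2.choose_spec

theorem coe_star_eq {S : adjointableEnd B E} {S' : E →L[ℂ] E} (h : IsAdjointPair B S S') :
    ((star S : adjointableEnd B E) : E →L[ℂ] E) = S' :=
  (isAdjointPair_coe_star S).unique h

noncomputable instance : StarRing (adjointableEnd B E) where
  star_involutive S := Subtype.ext <| coe_star_eq (isAdjointPair_coe_star S).symm
  star_mul S R := Subtype.ext <| coe_star_eq <|
    (isAdjointPair_coe_star R).comp (isAdjointPair_coe_star S)
  star_add S R := Subtype.ext <| coe_star_eq <|
    (isAdjointPair_coe_star S).add (isAdjointPair_coe_star R)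

noncomputable instance : StarModule ℂ (adjointableEnd B E) where
  star_smul c S := Subtype.ext <| coe_star_eq <| (isAdjointPair_coe_star S).smul c

@[simp]
theorem algebraMap_apply (r : ℝ) (x : E) :
    (algebraMap ℝ (adjointableEnd B E) r : E →L[ℂ] E) x = r • x := by
  rw [IsScalarTower.algebraMap_apply ℝ ℂ (adjointableEnd B E)]
  simp [Algebra.algebraMap_eq_smul_one]

theorem inner_sub_algebraMap_apply (S : adjointableEnd B E) (r : ℝ) (x : E) :
    ⟪x, (↑(S - algebraMap ℝ _ r) : E →L[ℂ] E) x⟫_B = ⟪x, (S : E →L[ℂ] E) x⟫_B - r • ⟪x, x⟫_B := by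
  simp

variable [StarOrderedRing B] [CompleteSpace E]

/-- `adjointableEnd B E` is the image of the complete space of adjoint pairs under `p ↦ p.1`, which
is an isometry there because `‖S' - T'‖ ≤ ‖S - T‖`. -/
theorem isClosed : IsClosed (adjointableEnd B E : Set (E →L[ℂ] E)) := by
  let P := {p : (E →L[ℂ] E) × (E →L[ℂ] E) | IsAdjointPair B p.1 p.2}
  have : CompleteSpace P := isClosed_setOf_isAdjointPair.completeSpace_coe
  have hrange : (adjointableEnd B E : Set (E →L[ℂ] E)) = Set.range fun p : P => p.1.1 := by
    ext S
    exact ⟨fun ⟨S', h⟩ => ⟨⟨(S, S'), h⟩, rfl⟩, fun ⟨p, hp⟩ => hp ▸ ⟨p.1.2, p.2⟩⟩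
  rw [hrange]
  refine AntilipschitzWith.isClosed_range (K := 1) ?_
    (uniformContinuous_fst.comp uniformContinuous_subtype_val)
  refine AntilipschitzWith.of_le_mul_dist fun p q => ?_
  rw [NNReal.coe_one, one_mul, Subtype.dist_eq, Prod.dist_eq, dist_eq_norm, dist_eq_norm]
  exact max_le le_rfl (p.2.sub q.2).norm_le

instance : CompleteSpace (adjointableEnd B E) := isClosed.completeSpace_coe

noncomputable instance : CStarRing (adjointableEnd B E) where
  norm_mul_self_le S := by
    rw [← sq]
    exact (isAdjointPair_coe_star S).symm.norm_sq_le_norm_comp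

noncomputable instance : CStarAlgebra (adjointableEnd B E) where

end adjointableEnd

end AdjointableEnd

section Order

variable {B E : Type*} [NonUnitalCStarAlgebra B] [PartialOrder B] [StarOrderedRing B]
  [SMul B E] [NormedAddCommGroup E] [NormedSpace ℂ E] [CStarModule B E]

theorem mul_norm_le_norm_of_mul_norm_sq_le_norm_inner {R : E → E} {c : ℝ} {x : E}
    (h : c * ‖x‖ ^ 2 ≤ ‖⟪x, R x⟫_B‖) : c * ‖x‖ ≤ ‖R x‖ := by
  rcases (norm_nonneg x).eq_or_lt with hx | hx
  · rw [← hx, mul_zero]; exact norm_nonneg _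
  · refine le_of_mul_le_mul_right ?_ hx
    calc c * ‖x‖ * ‖x‖ = c * ‖x‖ ^ 2 := by ring
      _ ≤ ‖x‖ * ‖R x‖ := h.trans (norm_inner_le E)
      _ = ‖R x‖ * ‖x‖ := mul_comm _ _

namespace adjointableEnd

variable [CompleteSpace E]

noncomputable instance : PartialOrder (adjointableEnd B E) := CStarAlgebra.spectralOrder _

instance : StarOrderedRing (adjointableEnd B E) := CStarAlgebra.spectralOrderedRing _

theorem inner_nonneg_right {S : adjointableEnd B E} (hS : 0 ≤ S) (x : E) :
    0 ≤ ⟪x, (S : E →L[ℂ] E) x⟫_B := by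
  have hR := isAdjointPair_coe_star (CFC.sqrt S)
  rw [(CFC.sqrt_nonneg S).isSelfAdjoint.star_eq] at hR
  rw [← CFC.sqrt_mul_sqrt_self S, Subalgebra.coe_mul, mul_apply_eq_comp, ← hR]
  exact inner_self_nonneg

theorem smul_inner_self_le_inner_of_algebraMap_le {S : adjointableEnd B E} {r : ℝ}
    (h : algebraMap ℝ _ r ≤ S) (x : E) : r • ⟪x, x⟫_B ≤ ⟪x, (S : E →L[ℂ] E) x⟫_B := by
  rw [← sub_nonneg, ← inner_sub_algebraMap_apply]
  exact inner_nonneg_right (sub_nonneg.mpr h) x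

theorem isStrictlyPositive_of_inner {S : adjointableEnd B E} (hS : IsSelfAdjoint S) {c : ℝ}
    (hc : 0 < c) (h_nonneg : ∀ x, 0 ≤ ⟪x, (S : E →L[ℂ] E) x⟫_B)
    (h_bdd : ∀ x, c * ‖x‖ ^ 2 ≤ ‖⟪x, (S : E →L[ℂ] E) x⟫_B‖) : IsStrictlyPositive S := by
  rw [StarOrderedRing.isStrictlyPositive_iff_spectrum_pos (R := ℝ) S hS]
  intro ρ hρ
  by_contra! hρ0
  have h_bdd_below :
      ∀ x, c * ‖x‖ ≤ ‖((S - algebraMap ℝ _ ρ : adjointableEnd B E) : E →L[ℂ] E) x‖ := fun x => by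
    refine mul_norm_le_norm_of_mul_norm_sq_le_norm_inner (B := B) ((h_bdd x).trans ?_)
    refine CStarAlgebra.norm_le_norm_of_nonneg_of_le (h_nonneg x) ?_
    rw [inner_sub_algebraMap_apply, le_sub_self_iff]
    exact smul_nonpos_of_nonpos_of_nonneg hρ0 inner_self_nonneg
  have h_unit : IsUnit (S - algebraMap ℝ _ ρ) :=
    (hS.sub (.algebraMap _ (.all ρ))).isUnit_of_le_norm_mul hc fun V =>
      ContinuousLinearMap.mul_opNorm_le_opNorm_comp hc h_bdd_below (V : E →L[ℂ] E)
  exact spectrum.notMem_iff.mpr (neg_sub S (algebraMap ℝ _ ρ) ▸ h_unit.neg) hρ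

end adjointableEnd

end Order

section Surjective

variable {B E F : Type*} [NonUnitalCStarAlgebra B] [PartialOrder B] [StarOrderedRing B]
  [SMul B E] [NormedAddCommGroup E] [NormedSpace ℂ E] [CStarModule B E]
  [SMul B F] [NormedAddCommGroup F] [NormedSpace ℂ F] [CStarModule B F]

theorem sqrt_mul_norm_le_of_smul_inner_self_le {R : E → F} {r : ℝ} (hr : 0 ≤ r) {x : E}
    (h : r • ⟪x, x⟫_B ≤ ⟪R x, R x⟫_B) : √r * ‖x‖ ≤ ‖R x‖ := by
  have := CStarAlgebra.norm_le_norm_of_nonneg_of_le (smul_nonneg hr inner_self_nonneg) h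
  rw [norm_smul, Real.norm_of_nonneg hr, ← norm_sq_eq B, ← norm_sq_eq B] at this
  rw [← Real.sqrt_sq (norm_nonneg (R x)), ← Real.sqrt_sq (norm_nonneg x), ← Real.sqrt_mul hr]
  exact Real.sqrt_le_sqrt this

variable [CompleteSpace E] {T : F →L[ℂ] E} {Ts : E →L[ℂ] F}

namespace IsAdjointPair

theorem surjective_and_exists_smul_inner_le (hT : IsAdjointPair B T Ts) {m : ℝ} (hm : 0 < m)
    (hb : ∀ y, m * ‖y‖ ≤ ‖Ts y‖) :
    Function.Surjective T ∧ ∃ r : ℝ, 0 < r ∧ ∀ y, r • ⟪y, y⟫_B ≤ ⟪Ts y, Ts y⟫_B := by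
  let S : adjointableEnd B E := ⟨T ∘L Ts, T ∘L Ts, hT.symm.comp hT⟩
  have h_form : ∀ y, ⟪y, (S : E →L[ℂ] E) y⟫_B = ⟪Ts y, Ts y⟫_B := fun y =>
    (hT.symm y (Ts y)).symm
  have hS : IsStrictlyPositive S := by
    refine adjointableEnd.isStrictlyPositive_of_inner
      (Subtype.ext (adjointableEnd.coe_star_eq (hT.symm.comp hT))) (pow_pos hm 2)
      (fun y => ?_) fun y => ?_
    · rw [h_form]; exact inner_self_nonneg
    · rw [h_form, ← norm_sq_eq B, ← mul_pow]
      exact pow_le_pow_left₀ (by positivity) (hb y) 2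
  obtain ⟨r, hr, hrS⟩ : ∃ r > 0, algebraMap ℝ _ r ≤ S := by
    rcases subsingleton_or_nontrivial (adjointableEnd B E)
    · exact ⟨1, one_pos, (Subsingleton.elim _ _).le⟩
    · exact (CFC.exists_pos_algebraMap_le_iff hS.isSelfAdjoint).2 fun _ => hS.spectrum_pos
  refine ⟨?_, r, hr, fun y =>
    h_form y ▸ adjointableEnd.smul_inner_self_le_inner_of_algebraMap_le hrS y⟩
  exact Function.Surjective.of_comp (g := Ts) (ContinuousLinearMap.isUnit_iff_bijective.mp
    (hS.isUnit.map (adjointableEnd B E).val)).2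

variable [CompleteSpace F]

theorem exists_mul_norm_le_of_surjective (hT : IsAdjointPair B T Ts)
    (hsurj : Function.Surjective T) : ∃ m : ℝ, 0 < m ∧ ∀ y, m * ‖y‖ ≤ ‖Ts y‖ := by
  obtain ⟨C, hC, hpre⟩ := T.exists_preimage_norm_le hsurj
  refine ⟨C⁻¹, inv_pos.2 hC, fun y => ?_⟩
  obtain ⟨x, rfl, hx⟩ := hpre y
  rw [inv_mul_le_iff₀ hC]
  rcases (norm_nonneg (T x)).eq_or_lt with h0 | hpos
  · rw [← h0]; positivity
  · refine le_of_mul_le_mul_right ?_ hpos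
    calc ‖T x‖ * ‖T x‖ = ‖⟪x, Ts (T x)⟫_B‖ := by rw [← sq, norm_sq_eq B, hT]
      _ ≤ ‖x‖ * ‖Ts (T x)‖ := norm_inner_le F
      _ ≤ C * ‖T x‖ * ‖Ts (T x)‖ := by gcongr
      _ = C * ‖Ts (T x)‖ * ‖T x‖ := by ring

theorem surjective_iff_exists_mul_norm_le (hT : IsAdjointPair B T Ts) :
    Function.Surjective T ↔ ∃ m : ℝ, 0 < m ∧ ∀ y, m * ‖y‖ ≤ ‖Ts y‖ :=
  ⟨hT.exists_mul_norm_le_of_surjective, fun ⟨_, hm, hb⟩ =>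
    (hT.surjective_and_exists_smul_inner_le hm hb).1⟩

theorem surjective_iff_exists_smul_inner_le (hT : IsAdjointPair B T Ts) :
    Function.Surjective T ↔ ∃ r : ℝ, 0 < r ∧ ∀ y, r • ⟪y, y⟫_B ≤ ⟪Ts y, Ts y⟫_B := by
  refine ⟨fun hsurj => ?_, fun ⟨r, hr, h⟩ => ?_⟩
  · obtain ⟨m, hm, hb⟩ := hT.exists_mul_norm_le_of_surjective hsurj
    exact (hT.surjective_and_exists_smul_inner_le hm hb).2
  · exact (hT.surjective_and_exists_smul_inner_le (Real.sqrt_pos.2 hr) fun y =>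
      sqrt_mul_norm_le_of_smul_inner_self_le hr.le (h y)).1

end IsAdjointPair

end Surjective

end CStarModule

/-- Reading the inner product in `Aᵐᵒᵖ` turns the right `A`-action into the left action of
Mathlib's `CStarModule`, whose theory then applies. -/
instance CStarModuleRight.toCStarModuleMulOpposite {A E : Type*} [NonUnitalCStarAlgebra A]
    [PartialOrder A] [AddCommGroup E] [Module ℂ E] [SMul Aᵐᵒᵖ E] [Norm E]
    [CStarModuleRight A E] : CStarModule Aᵐᵒᵖ E where
  inner x y := .op (inner A x y)
  inner_add_right := congrArg MulOpposite.op CStarModuleRight.inner_add_right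
  inner_self_nonneg := MulOpposite.op_nonneg.2 CStarModuleRight.inner_self_nonneg
  inner_self := (MulOpposite.op_eq_zero_iff _).trans CStarModuleRight.inner_self
  inner_op_smul_right := congrArg MulOpposite.op CStarModuleRight.inner_op_smul_right
  inner_smul_right_complex := congrArg MulOpposite.op CStarModuleRight.inner_smul_right_complex
  star_inner x y := congrArg MulOpposite.op (CStarModuleRight.star_inner x y)
  norm_eq_sqrt_norm_inner_self := CStarModuleRight.norm_eq_sqrt_norm_inner_self

theorem CStarModuleRight.inner_mulOpposite {A E : Type*} [NonUnitalCStarAlgebra A]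
    [PartialOrder A] [AddCommGroup E] [Module ℂ E] [SMul Aᵐᵒᵖ E] [Norm E]
    [CStarModuleRight A E] (x y : E) : ⟪x, y⟫_Aᵐᵒᵖ = .op (inner A x y) :=
  rfl

/-- For an adjointable operator `T : H → K` between Hilbert C⋆-modules,
surjectivity of `T` is equivalent to `T*` being bounded below with respect to the
`A`-valued inner product, and also to `T*` being bounded below in norm. -/
theorem stmt15
    {A : Type*} [CStarAlgebra A] [PartialOrder A] [StarOrderedRing A]
    {H : Type*} [NormedAddCommGroup H] [NormedSpace ℂ H] [SMul Aᵐᵒᵖ H]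
    [CStarModuleRight A H] [CompleteSpace H]
    {K : Type*} [NormedAddCommGroup K] [NormedSpace ℂ K] [SMul Aᵐᵒᵖ K]
    [CStarModuleRight A K] [CompleteSpace K]
    (T : H →L[ℂ] K) (Ts : K →L[ℂ] H)
    (hT : ∀ (x : H) (y : K), inner (𝕜 := A) (T x) y = inner (𝕜 := A) x (Ts y)) :
    (Function.Surjective T ↔
      ∃ m' : ℝ, 0 < m' ∧ ∀ x : K, m' • inner (𝕜 := A) x x ≤ inner (𝕜 := A) (Ts x) (Ts x)) ∧
    (Function.Surjective T ↔
      ∃ m : ℝ, 0 < m ∧ ∀ x : K, m * ‖x‖ ≤ ‖Ts x‖) := by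
  have hT' : IsAdjointPair Aᵐᵒᵖ T Ts := fun x y => congrArg MulOpposite.op (hT x y)
  refine ⟨?_, hT'.surjective_iff_exists_mul_norm_le⟩
  simp only [hT'.surjective_iff_exists_smul_inner_le, CStarModuleRight.inner_mulOpposite,
    ← MulOpposite.op_smul, MulOpposite.op_le_op]
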